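/- (Theorem OI_length) Let m, t, g be natural numbers with m > 0. For all natural numbers X and all lists of natural numbers ℓ and St, if OnlineInfeasible X ℓ St holds, then the sum of the elements of ℓ is at most m·g. -/

import Mathlib

/-- `AddToBin St e b` increases the load of the `b`-th bin of `St` by `e`
(appending a new bin of load `e` if `b` is beyond the length of `St`). -/
def AddToBin : List ℕ → ℕ → ℕ → List ℕ
  | [], e, _ => [e]
  | x :: s, e, 0 => (x + e) :: s
  | x :: s, e, k + 1 => x :: AddToBin s e k

/-- The load of the most loaded bin. -/
def MaxBinValue (St : List ℕ) : ℕ := St.foldr max 0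

/-- The load of a bin given the list of its items. -/
def BinSum (B : List ℕ) : ℕ := B.sum

/-- The largest bin load of a packing, given as a list of bins (lists of items). -/
def MaxBinSum (P : List (List ℕ)) : ℕ := (P.map BinSum).foldr max 0

/-- `CompletePacking ℓ P` : the packing `P` uses at least all the items of `ℓ`:
every natural number occurs in the concatenation of `P` at least as many times
as in `ℓ`. -/
def CompletePacking (ℓ : List ℕ) (P : List (List ℕ)) : Prop :=
  ∀ e, ℓ.count e ≤ P.flatten.count e

/-- `SolutionPacking m g ℓ P` : `P` is a certificate that the items of `ℓ` can be
packed into `m` bins of capacity `g`. -/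
def SolutionPacking (m g : ℕ) (ℓ : List ℕ) (P : List (List ℕ)) : Prop :=
  CompletePacking ℓ P ∧ P.length = m ∧ MaxBinSum P ≤ g

/-- The inductive predicate `OnlineInfeasible m t g X ℓ St` of the Coq
formalization: either (Overflow) some bin load of `St` is at least `t` and there
is a packing certificate for `ℓ`, or (Deadend) `St` has length at most `m` and
there is a positive item `e` (here an explicit constructor argument, which is
equivalent to the existential quantification of the Coq definition) such that,
whatever bin `b < m` it is packed into, the resulting state is again
`OnlineInfeasible` with fuel decreased by one. -/
inductive OnlineInfeasible (m t g : ℕ) : ℕ → List ℕ → List ℕ → Prop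
  | overflow (X : ℕ) (ℓ St : List ℕ) : t ≤ MaxBinValue St →
      (∃ P, SolutionPacking m g ℓ P) → OnlineInfeasible m t g X ℓ St
  | deadend (X : ℕ) (ℓ St : List ℕ) (e : ℕ) : St.length ≤ m → 0 < e →
      (∀ b, b < m → OnlineInfeasible m t g X (e :: ℓ) (AddToBin St e b)) →
      OnlineInfeasible m t g (X + 1) ℓ St

theorem List.Subperm.sum_le_sum {M : Type*} [AddCommMonoid M] [Preorder M] [AddLeftMono M]
    {l₁ l₂ : List M} (h : l₁.Subperm l₂) (h₀ : ∀ a ∈ l₂, 0 ≤ a) : l₁.sum ≤ l₂.sum := by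
  obtain ⟨l, hperm, hsub⟩ := h
  exact hperm.sum_eq ▸ hsub.sum_le_sum h₀

theorem CompletePacking.subperm {ℓ : List ℕ} {P : List (List ℕ)} (h : CompletePacking ℓ P) :
    ℓ.Subperm P.flatten :=
  List.subperm_ext_iff.mpr fun e _ => h e

theorem binSum_le_maxBinSum {P : List (List ℕ)} {B : List ℕ} (hB : B ∈ P) :
    BinSum B ≤ MaxBinSum P :=
  List.le_max_of_le' 0 (List.mem_map_of_mem hB) le_rfl

theorem sum_flatten_le_length_mul {P : List (List ℕ)} {g : ℕ} (h : MaxBinSum P ≤ g) :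
    P.flatten.sum ≤ P.length * g := by
  rw [List.sum_flatten, ← List.length_map (f := List.sum), ← smul_eq_mul]
  refine List.sum_le_card_nsmul _ _ ?_
  exact List.forall_mem_map.mpr fun B hB => (binSum_le_maxBinSum hB).trans h

theorem SolutionPacking.sum_le {m g : ℕ} {ℓ : List ℕ} {P : List (List ℕ)}
    (h : SolutionPacking m g ℓ P) : ℓ.sum ≤ m * g := by
  obtain ⟨hcomplete, rfl, hmax⟩ := h
  calc ℓ.sum ≤ P.flatten.sum := hcomplete.subperm.sum_le_sum fun _ _ => Nat.zero_le _
    _ ≤ P.length * g := sum_flatten_le_length_mul hmax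

/-- Theorem `OI_length`: if `OnlineInfeasible X ℓ St` holds, then the sum of the
elements of `ℓ` is at most `m·g`. -/
theorem OI_length (m t g : ℕ) (hm : 0 < m) :
    ∀ (X : ℕ) (ℓ St : List ℕ), OnlineInfeasible m t g X ℓ St → ℓ.sum ≤ m * g := by
  intro X ℓ St h
  induction h with
  | overflow _ _ _ _ hpacking =>
    obtain ⟨P, hP⟩ := hpacking
    exact hP.sum_le
  | deadend _ ℓ _ e _ _ _ ih =>
    -- Pack the item `e` into bin `0`, which exists since `m > 0`.
    calc ℓ.sum ≤ (e :: ℓ).sum := by simp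
      _ ≤ m * g := ih 0 hm
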